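/- Let ε > 0, ℓ ≥ 1 a natural number, and R_x = (1+ε)^x. Suppose T₁ ∈ [R_{x₁}, R_{x₁+1}] and T₂ ∈ [R_{x₂}, R_{x₂+1}] with T₁ ≤ T₂ and x₁ ≤ x₂. Define the ℓ-fold time-stretched values T₁' = R_{x₁+ℓ} + (T₁ − R_{x₁}) and T₂' = R_{x₂+ℓ} + (T₂ − R_{x₂}). Then T₂' − T₁' ≥ (T₂ − T₁) + ℓε·(R_{x₂} − R_{x₁}). -/
import Mathlib

theorem stmt_2 (ε : ℝ) (hε : 0 < ε) (ℓ : ℕ) (hℓ : 1 ≤ ℓ)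
    (x₁ x₂ : ℕ) (hx : x₁ ≤ x₂) (T₁ T₂ : ℝ)
    (hT₁ : T₁ ∈ Set.Icc ((1 + ε) ^ x₁) ((1 + ε) ^ (x₁ + 1)))
    (hT₂ : T₂ ∈ Set.Icc ((1 + ε) ^ x₂) ((1 + ε) ^ (x₂ + 1)))
    (hT : T₁ ≤ T₂) :
    ((1 + ε) ^ (x₂ + ℓ) + (T₂ - (1 + ε) ^ x₂)) - ((1 + ε) ^ (x₁ + ℓ) + (T₁ - (1 + ε) ^ x₁))
      ≥ (T₂ - T₁) + (ℓ : ℝ) * ε * ((1 + ε) ^ x₂ - (1 + ε) ^ x₁) := by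
  have h1 : (1:ℝ) ≤ 1 + ε := by linarith
  have hD : (1 + ε) ^ x₁ ≤ (1 + ε) ^ x₂ := pow_le_pow_right₀ h1 hx
  have hB : 1 + (ℓ : ℝ) * ε ≤ (1 + ε) ^ ℓ := one_add_mul_le_pow (by linarith) ℓ
  rw [pow_add, pow_add]
  nlinarith [mul_le_mul_of_nonneg_left hB (sub_nonneg.2 hD)]
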